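/- arXiv:0910.1781 — 2 statements merged into one kernel-verified Lean document; each statement's English description precedes it below -/
import Mathlib

section
/- Let W be a topological space, let w₀, w₁ ∈ W, let τ₀ and τ₁ be paths from w₀ to w₁, and let φ be a loop at w₁. Then there exists a continuous map F : [0,1] × [0,1] → W satisfying F(t,0) = τ₀(t), F(t,1) = τ₁(t), F(0,s) = w₀, and F(1,s) = φ(s) for all s, t ∈ [0,1], if and only if the rel-endpoint homotopy class of τ₁ equals the rel-endpoint homotopy class of the concatenation of τ₀ followed by φ, i.e., ⟦τ₁⟧ = ⟦τ₀⟧ · ⟦φ⟧. -/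
attribute [local instance] Path.Homotopic.setoid

open unitInterval

/-!
Read column by column, a map of the square with bottom `α`, top `β`, constant left side and right
side `ρ` is a homotopy of maps `I → X`, and `Path.Homotopic.map_trans_evalAt` says that the two
halves `α.trans ρ` and `(refl a).trans β` of the boundary of the square are homotopic.

Conversely, let `H` be a homotopy from `α.trans ρ` to `β`. Along its right side `H` is constantly
`c`, so we may glue there a strip on which the map forgets the homotopy parameter and runs back
along `ρ`. At height `s ≥ 1 / 2` the upper half of the square reads this glued map at homotopy
parameter `2 s - 1` along `x = t (2 - s)`: the top edge is `β`, and the right edge lies in the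
strip, where the homotopy parameter no longer matters, and traces `ρ`. The lower half is a
reparametrisation of `α.trans ρ` connecting `α` to the bottom of the upper half.
-/

open Set

namespace Path

variable {X : Type*} [TopologicalSpace X] {a b c : X}

theorem extend_trans_div_two (α : Path a b) (ρ : Path b c) {t : ℝ} (ht : t ≤ 1) :
    (α.trans ρ).extend (t / 2) = α.extend t := by
  rw [extend_trans_of_le_half _ _ (by linarith), mul_div_cancel₀ _ two_ne_zero]

theorem extend_trans_one_add_div_two (α : Path a b) (ρ : Path b c) {s : ℝ} (hs : 0 ≤ s) :
    (α.trans ρ).extend ((1 + s) / 2) = ρ.extend s := by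
  rw [extend_trans_of_half_le _ _ (by linarith)]
  ring_nf

namespace Homotopy

variable {γ β : Path a c}

noncomputable def extendBySymm (H : γ.Homotopy β) (ρ : Path b c) (u x : ℝ) : X :=
  if x ≤ 1 then H (projIcc 0 1 zero_le_one u, projIcc 0 1 zero_le_one x) else ρ.extend (2 - x)

variable (H : γ.Homotopy β) (ρ : Path b c)

theorem extendBySymm_of_le_one {u x : ℝ} (hx : x ≤ 1) :
    H.extendBySymm ρ u x = H (projIcc 0 1 zero_le_one u, projIcc 0 1 zero_le_one x) :=
  if_pos hx

theorem extendBySymm_of_one_le {u x : ℝ} (hx : 1 ≤ x) :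
    H.extendBySymm ρ u x = ρ.extend (2 - x) := by
  rcases hx.lt_or_eq with hx | rfl
  · exact if_neg hx.not_ge
  · rw [extendBySymm_of_le_one _ _ le_rfl]
    norm_num

theorem extendBySymm_zero_of_le_one {x : ℝ} (hx : x ≤ 1) :
    H.extendBySymm ρ 0 x = γ.extend x := by
  rw [extendBySymm_of_le_one _ _ hx, projIcc_left]
  exact H.apply_zero _

theorem continuous_extendBySymm {Y : Type*} [TopologicalSpace Y] {u x : Y → ℝ}
    (hu : Continuous u) (hx : Continuous x) : Continuous fun y => H.extendBySymm ρ (u y) (x y) := by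
  refine Continuous.if_le (by fun_prop) (by fun_prop) hx continuous_const fun y hy => ?_
  norm_num [hy]

end Homotopy

def IsHalfFreeHomotopy (F : I × I → X) (α : Path a b) (β : Path a c) (ρ : Path b c) : Prop :=
  Continuous F ∧ (∀ t, F (t, 0) = α t) ∧ (∀ t, F (t, 1) = β t) ∧ (∀ s, F (0, s) = a) ∧
    ∀ s, F (1, s) = ρ s

variable {α : Path a b} {ρ : Path b c} {β : Path a c}

theorem IsHalfFreeHomotopy.homotopic {F : I × I → X} (hF : IsHalfFreeHomotopy F α β ρ) :
    (α.trans ρ).Homotopic β := by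
  obtain ⟨hcont, hα, hβ, ha, hρ⟩ := hF
  let G : ContinuousMap.Homotopy (α : C(I, X)) β :=
    { toFun := fun p => F (p.2, p.1)
      map_zero_left := hα
      map_one_left := hβ }
  have hG : ∀ p, G p = F (p.2, p.1) := fun _ => rfl
  have square := (Homotopic.map_trans_evalAt G Path.id).pathCast α.source.symm β.target.symm
  refine .trans ?_ (Homotopic.refl_trans β)
  convert square using 1 <;> ext t <;>
    simp [Path.trans_apply, ContinuousMap.Homotopy.evalAt, hG, ha, hρ]

/-- The lower half interpolates linearly between `t / 2`, where `α.trans ρ` reads `α`, and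
`min (3 t / 2) (3 / 2 - 3 t / 4)`, where it reads `H.extendBySymm ρ 0 (3 t / 2)`; at `t = 1` the
interpolation is `(1 + s) / 2`, where it reads `ρ s`. -/
noncomputable def Homotopy.halfFreeFill (H : (α.trans ρ).Homotopy β) (t s : ℝ) : X :=
  if s ≤ 1 / 2 then
    (α.trans ρ).extend ((1 - 2 * s) * (t / 2) + 2 * s * min (3 * t / 2) (3 / 2 - 3 * t / 4))
  else H.extendBySymm ρ (2 * s - 1) (t * (2 - s))

theorem Homotopy.isHalfFreeHomotopy_halfFreeFill (H : (α.trans ρ).Homotopy β) :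
    IsHalfFreeHomotopy (fun p => H.halfFreeFill p.1 p.2) α β ρ := by
  refine ⟨?_, fun t => ?_, fun t => ?_, fun s => ?_, fun s => ?_⟩
  · refine Continuous.if_le (by fun_prop)
      (H.continuous_extendBySymm ρ (by fun_prop) (by fun_prop)) (by fun_prop) (by fun_prop) ?_
    rintro ⟨t, s⟩ (hs : (s : ℝ) = 1 / 2)
    obtain ⟨ht₀, ht₁⟩ := t.2
    norm_num only [hs]
    rcases le_total (t : ℝ) (2 / 3) with h | h
    · rw [H.extendBySymm_zero_of_le_one ρ (by linarith), min_eq_left (by linarith)]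
      ring_nf
    · rw [H.extendBySymm_of_one_le ρ (by linarith), min_eq_right (by linarith),
        ← extend_trans_one_add_div_two α ρ (by linarith)]
      ring_nf
  · simp [Homotopy.halfFreeFill, extend_trans_div_two α ρ t.2.2]
  · norm_num [Homotopy.halfFreeFill, H.extendBySymm_of_le_one ρ t.2.2]
  · dsimp only [Homotopy.halfFreeFill]
    split_ifs
    · norm_num
    · simp [H.extendBySymm_of_le_one ρ zero_le_one]
  · dsimp only [Homotopy.halfFreeFill]
    rw [Set.Icc.coe_one, one_mul, ← extend_extends' ρ s]
    split_ifs
    · rw [← extend_trans_one_add_div_two α ρ s.2.1]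
      norm_num
      ring_nf
    · rw [H.extendBySymm_of_one_le ρ (by linarith [s.2.2]), sub_sub_cancel]

theorem exists_isHalfFreeHomotopy_iff :
    (∃ F, IsHalfFreeHomotopy F α β ρ) ↔ (α.trans ρ).Homotopic β :=
  ⟨fun ⟨_, hF⟩ => hF.homotopic,
    fun ⟨H⟩ => ⟨_, H.isHalfFreeHomotopy_halfFreeFill⟩⟩

end Path

/-- Half-free homotopy lemma: given paths `τ₀ τ₁` from `w₀` to `w₁` and a loop `φ` at `w₁`,
there is a homotopy `F` from `τ₀` to `τ₁` fixing the initial point `w₀` and moving the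
terminal point along `φ` if and only if `⟦τ₁⟧ = ⟦τ₀⟧ ⬝ ⟦φ⟧`. -/
theorem half_free_homotopy {W : Type*} [TopologicalSpace W] {w₀ w₁ : W}
    (τ₀ τ₁ : Path w₀ w₁) (φ : Path w₁ w₁) :
    (∃ F : I × I → W, Continuous F ∧
        (∀ t, F (t, 0) = τ₀ t) ∧
        (∀ t, F (t, 1) = τ₁ t) ∧
        (∀ s, F (0, s) = w₀) ∧
        (∀ s, F (1, s) = φ s)) ↔
      (⟦τ₁⟧ : Path.Homotopic.Quotient w₀ w₁) =
        Path.Homotopic.Quotient.trans (⟦τ₀⟧ : Path.Homotopic.Quotient w₀ w₁) (⟦φ⟧ : Path.Homotopic.Quotient w₁ w₁) := by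
  change (∃ F, Path.IsHalfFreeHomotopy F τ₀ τ₁ φ) ↔
    (⟦τ₁⟧ : Path.Homotopic.Quotient w₀ w₁) = ⟦τ₀.trans φ⟧
  rw [Path.exists_isHalfFreeHomotopy_iff, Quotient.eq]
  exact ⟨fun h => h.symm, fun h => h.symm⟩
end

section
/- Let W be a topological space and W₀ ⊆ W a subset, and suppose (u, F) is an NDR presentation of the pair (W, W₀): u : W → [0,1] is continuous with W₀ = u⁻¹(0), F : W × [0,1] → W is continuous, F(w,0) = w for all w ∈ W, F(w,t) = w for all w ∈ W₀ and all t ∈ [0,1], and F(w,1) ∈ W₀ whenever u(w) < 1. Let Y be a nonempty compact topological space. Define û : C(Y,W) → [0,1] by û(f) = sup_{y ∈ Y} u(f(y)) and F̂ : C(Y,W) × [0,1] → C(Y,W) by (F̂(f,t))(y) = F(f(y), t). Then (û, F̂) is an NDR presentation of the pair (C(Y,W), C(Y,W₀)); that is: û is continuous; û⁻¹(0) = { f ∈ C(Y,W) : f(y) ∈ W₀ for all y ∈ Y }; F̂ is continuous; F̂(f,0) = f for all f; F̂(f,t) = f for all t whenever f(y) ∈ W₀ for all y; and if û(f) < 1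 then (F̂(f,1))(y) ∈ W₀ for all y ∈ Y. -/
open unitInterval

/-!
`û` is continuous because `f ↦ u ∘ f` is continuous into `C(Y, ℝ)`, whose compact-open topology
is that of uniform convergence since `Y` is compact, and taking the supremum is 1-Lipschitz there.
Since `u ≥ 0`, `û f = 0` exactly when `u ∘ f` vanishes. `F̂` is continuous because
`(f, t) ↦ (y ↦ (f y, t))` is continuous into `C(Y, W × I)` (by a tube-lemma argument that, unlike
continuity of evaluation, needs no local compactness of `Y`), and postcomposition with `F` is
continuous. The remaining properties hold pointwise in `y`.
-/

lemma ciSup_eq_iff_forall_eq_of_le {ι α : Type*} [Nonempty ι] [ConditionallyCompleteLattice α]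
    {g : ι → α} {a : α} (hg : ∀ i, a ≤ g i) (hbdd : BddAbove (Set.range g)) :
    ⨆ i, g i = a ↔ ∀ i, g i = a := by
  refine ⟨fun h i => le_antisymm (h ▸ le_ciSup hbdd i) (hg i), fun h => ?_⟩
  simp only [h, ciSup_const]

namespace ContinuousMap

variable {Y W Z T : Type*} [TopologicalSpace Y] [TopologicalSpace W] [TopologicalSpace Z]
  [TopologicalSpace T]

lemma lipschitzWith_iSup [CompactSpace Y] [Nonempty Y] :
    LipschitzWith 1 (fun g : C(Y, ℝ) => ⨆ y, g y) :=
  LipschitzWith.of_le_add fun g h => ciSup_le fun y =>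
    calc g y ≤ h y + dist g h := by
          linarith [Real.sub_le_dist (g y) (h y), dist_apply_le_dist (f := g) (g := h) y]
      _ ≤ (⨆ y, h y) + dist g h :=
          add_le_add_left (le_ciSup (isCompact_range h.continuous).bddAbove y) _

lemma continuous_iSup_comp [CompactSpace Y] [Nonempty Y] {u : W → ℝ} (hu : Continuous u) :
    Continuous (fun f : C(Y, W) => ⨆ y, u (f y)) :=
  lipschitzWith_iSup.continuous.comp (continuous_postcomp ⟨u, hu⟩)

def postcompHomotopy (F : C(W × T, Z)) : C(C(Y, W) × T, C(Y, Z)) where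
  toFun p := (F.comp prodSwap).comp (prodMk (const Y p.2) p.1)
  continuous_toFun := (continuous_postcomp _).comp (continuous_prodMk_const.comp continuous_swap)

@[simp]
lemma postcompHomotopy_apply (F : C(W × T, Z)) (f : C(Y, W)) (t : T) (y : Y) :
    postcompHomotopy F (f, t) y = F (f y, t) :=
  rfl

end ContinuousMap

/-- If `(u, F)` is an NDR presentation of the pair `(W, W₀)` and `Y` is a nonempty compact
space, then `(û, F̂)` with `û f = ⨆ y, u (f y)` and `(F̂ (f, t)) y = F (f y, t)` is an NDR
presentation of the pair `(C(Y, W), C(Y, W₀))`. -/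
theorem ndr_pair_function_space {Y W : Type*} [TopologicalSpace Y] [TopologicalSpace W]
    [CompactSpace Y] [Nonempty Y]
    (W₀ : Set W)
    (u : W → ℝ) (hu : Continuous u) (hu01 : ∀ w, u w ∈ Set.Icc (0 : ℝ) 1)
    (hW₀ : W₀ = {w | u w = 0})
    (F : W × I → W) (hF : Continuous F)
    (hF0 : ∀ w, F (w, 0) = w)
    (hFW₀ : ∀ w ∈ W₀, ∀ t : I, F (w, t) = w)
    (hF1 : ∀ w, u w < 1 → F (w, 1) ∈ W₀) :
    Continuous (fun f : C(Y, W) => ⨆ y : Y, u (f y)) ∧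
      (∀ f : C(Y, W), (⨆ y : Y, u (f y)) = 0 ↔ ∀ y, f y ∈ W₀) ∧
      ∃ Fhat : C(Y, W) × I → C(Y, W),
        (∀ (f : C(Y, W)) (t : I) (y : Y), Fhat (f, t) y = F (f y, t)) ∧
        Continuous Fhat ∧
        (∀ f : C(Y, W), Fhat (f, 0) = f) ∧
        (∀ f : C(Y, W), (∀ y, f y ∈ W₀) → ∀ t : I, Fhat (f, t) = f) ∧
        (∀ f : C(Y, W), (⨆ y : Y, u (f y)) < 1 → ∀ y, Fhat (f, 1) y ∈ W₀) := by
  have hbdd (f : C(Y, W)) : BddAbove (Set.range fun y => u (f y)) :=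
    (isCompact_range (hu.comp f.continuous)).bddAbove
  refine ⟨ContinuousMap.continuous_iSup_comp hu, fun f => ?_,
    ContinuousMap.postcompHomotopy ⟨F, hF⟩, fun _ _ _ => rfl,
    (ContinuousMap.postcompHomotopy _).continuous,
    fun f => ContinuousMap.ext fun y => hF0 (f y),
    fun f hf t => ContinuousMap.ext fun y => hFW₀ (f y) (hf y) t,
    fun f hf y => hF1 (f y) ((le_ciSup (hbdd f) y).trans_lt hf)⟩
  rw [hW₀]
  exact ciSup_eq_iff_forall_eq_of_le (fun y => (hu01 (f y)).1) (hbdd f)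
end
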